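/- Super-satisfied bound on critical values: for any edge e and any ground state σ ∈ 𝒢(J), the critical value satisfies |C_e(J,σ)| ≤ 𝒮_e, where 𝒮_e = min(∑_{z≠y, {x,z}∈E} |J_{xz}|, ∑_{z≠x, {y,z}∈E} |J_{yz}|) for e = {x,y}. -/
import Mathlib


open scoped BigOperators

noncomputable def spin (b : Bool) : ℝ := if b then 1 else -1

noncomputable def boundaryEnergy {V : Type*} [DecidableEq V] (G : SimpleGraph V)
    [G.LocallyFinite] (J : V → V → ℝ) (σ : V → Bool) (A : Finset V) : ℝ :=
  ∑ x ∈ A, ∑ y ∈ (G.neighborFinset x).filter (fun y => y ∉ A),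
    J x y * spin (σ x) * spin (σ y)

def IsGroundState {V : Type*} [DecidableEq V] (G : SimpleGraph V) [G.LocallyFinite]
    (J : V → V → ℝ) (σ : V → Bool) : Prop :=
  ∀ A : Finset V, 0 ≤ boundaryEnergy G J σ A

noncomputable def updateCoupling {V : Type*} [DecidableEq V] (J : V → V → ℝ) (u v : V)
    (y : ℝ) : V → V → ℝ :=
  fun x z => if s(x, z) = s(u, v) then y else J x z

noncomputable def criticalValue {V : Type*} [DecidableEq V] (G : SimpleGraph V)
    [G.LocallyFinite] (J : V → V → ℝ) (σ : V → Bool) (u v : V) : ℝ :=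
  if spin (σ u) * spin (σ v) = 1 then
    sInf {y : ℝ | IsGroundState G (updateCoupling J u v y) σ}
  else sSup {y : ℝ | IsGroundState G (updateCoupling J u v y) σ}

noncomputable def superSatValue {V : Type*} [DecidableEq V] (G : SimpleGraph V)
    [G.LocallyFinite] (J : V → V → ℝ) (u v : V) : ℝ :=
  min (∑ z ∈ (G.neighborFinset u).erase v, |J u z|)
      (∑ z ∈ (G.neighborFinset v).erase u, |J v z|)

section Helpers

variable {V : Type*} [DecidableEq V] (G : SimpleGraph V) [G.LocallyFinite]

lemma spin_sq (b : Bool) : spin b * spin b = 1 := by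
  cases b <;> norm_num [spin]

lemma abs_spin (b : Bool) : |spin b| = 1 := by
  cases b <;> norm_num [spin]

lemma updateCoupling_comm (J : V → V → ℝ) (u v : V) (y : ℝ) :
    updateCoupling J u v y = updateCoupling J v u y := by
  funext x z
  simp only [updateCoupling]
  rw [show (s(u, v) : Sym2 V) = s(v, u) from Sym2.eq_swap]

lemma updateCoupling_symm (J : V → V → ℝ) (hJ : ∀ x z, J x z = J z x) (u v : V) (y : ℝ) :
    ∀ x z, updateCoupling J u v y x z = updateCoupling J u v y z x := by
  intro x z
  simp only [updateCoupling]
  rw [show (s(x, z) : Sym2 V) = s(z, x) from Sym2.eq_swap, hJ x z]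

lemma updateCoupling_apply_eq (J : V → V → ℝ) (u v : V) (y : ℝ) :
    updateCoupling J u v y u v = y := if_pos rfl

lemma updateCoupling_apply_eq' (J : V → V → ℝ) (u v : V) (y : ℝ) :
    updateCoupling J u v y v u = y := if_pos Sym2.eq_swap

lemma updateCoupling_apply_ne (J : V → V → ℝ) {u v x z : V} (y : ℝ)
    (h : ¬((x = u ∧ z = v) ∨ (x = v ∧ z = u))) :
    updateCoupling J u v y x z = J x z := by
  rw [updateCoupling, if_neg]
  rwa [Sym2.eq_iff]

lemma boundaryEnergy_erase (W : V → V → ℝ) (hW : ∀ x z, W x z = W z x)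
    (σ : V → Bool) (A : Finset V) (u : V) (hu : u ∈ A) :
    boundaryEnergy G W σ A =
      boundaryEnergy G W σ (A.erase u)
      + ∑ z ∈ (G.neighborFinset u).filter (fun z => z ∉ A),
          W u z * spin (σ u) * spin (σ z)
      - ∑ z ∈ (G.neighborFinset u).filter (fun z => z ∈ A.erase u),
          W u z * spin (σ u) * spin (σ z) := by
  classical
  unfold boundaryEnergy
  rw [← Finset.sum_erase_add A _ hu]
  have key : ∀ x ∈ A.erase u,
      (∑ z ∈ (G.neighborFinset x).filter (fun z => z ∉ A.erase u),
          W x z * spin (σ x) * spin (σ z))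
      = (∑ z ∈ (G.neighborFinset x).filter (fun z => z ∉ A),
          W x z * spin (σ x) * spin (σ z))
        + (if x ∈ (G.neighborFinset u).filter (fun z => z ∈ A.erase u) then
            W u x * spin (σ u) * spin (σ x) else 0) := by
    intro x hx
    have h2 : (if x ∈ (G.neighborFinset u).filter (fun z => z ∈ A.erase u) then
        W u x * spin (σ u) * spin (σ x) else 0)
        = ∑ z ∈ G.neighborFinset x,
            (if z = u then W x z * spin (σ x) * spin (σ z) else 0) := by
      rw [Finset.sum_ite_eq' (G.neighborFinset x) u
        (fun z => W x z * spin (σ x) * spin (σ z))]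
      by_cases h : G.Adj x u
      · rw [if_pos ((G.mem_neighborFinset x u).2 h),
          if_pos (Finset.mem_filter.2 ⟨(G.mem_neighborFinset u x).2 h.symm, hx⟩)]
        rw [hW u x]; ring
      · rw [if_neg (fun hc => h ((G.mem_neighborFinset x u).1 hc)),
          if_neg (fun hc => h
            (((G.mem_neighborFinset u x).1 (Finset.mem_filter.1 hc).1).symm))]
    rw [h2, Finset.sum_filter, Finset.sum_filter, ← Finset.sum_add_distrib]
    refine Finset.sum_congr rfl fun z hz => ?_
    by_cases hzu : z = u
    · subst hzu
      simp [Finset.mem_erase, hu]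
    · simp [Finset.mem_erase, hzu]
  rw [Finset.sum_congr rfl key, Finset.sum_add_distrib, Finset.sum_ite_mem,
    Finset.inter_eq_right.2 (fun z hz => (Finset.mem_filter.1 hz).2)]
  ring

lemma boundaryEnergy_update_eq (J : V → V → ℝ) (u v : V) (y : ℝ) (σ : V → Bool)
    (A : Finset V) (h : u ∈ A ↔ v ∈ A) :
    boundaryEnergy G (updateCoupling J u v y) σ A = boundaryEnergy G J σ A := by
  unfold boundaryEnergy
  refine Finset.sum_congr rfl fun x hx => Finset.sum_congr rfl fun z hz => ?_
  have hz' : z ∉ A := (Finset.mem_filter.1 hz).2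
  rw [updateCoupling_apply_ne]
  rintro (⟨rfl, rfl⟩ | ⟨rfl, rfl⟩)
  · exact hz' (h.1 hx)
  · exact hz' (h.2 hx)

lemma crossing_bound_left {u v : V} (huv : G.Adj u v) (J : V → V → ℝ)
    (hJ : ∀ x z, J x z = J z x) (σ : V → Bool) (hσ : IsGroundState G J σ) (y : ℝ)
    (A : Finset V) (hu : u ∈ A) (hv : v ∉ A) :
    spin (σ u) * spin (σ v) * y - ∑ z ∈ (G.neighborFinset u).erase v, |J u z| ≤
      boundaryEnergy G (updateCoupling J u v y) σ A := by
  classical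
  have hKsym := updateCoupling_symm J hJ u v y
  have hkey := boundaryEnergy_erase G (updateCoupling J u v y) hKsym σ A u hu
  have hE : boundaryEnergy G (updateCoupling J u v y) σ (A.erase u)
      = boundaryEnergy G J σ (A.erase u) :=
    boundaryEnergy_update_eq G J u v y σ _
      (iff_of_false (Finset.notMem_erase u A)
        (fun hc => hv (Finset.mem_of_mem_erase hc)))
  have h0 : 0 ≤ boundaryEnergy G J σ (A.erase u) := hσ _
  rw [← hE] at h0
  have hvmem : v ∈ (G.neighborFinset u).filter (fun z => z ∉ A) :=
    Finset.mem_filter.2 ⟨(G.mem_neighborFinset u v).2 huv, hv⟩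
  rw [← Finset.add_sum_erase _ _ hvmem, updateCoupling_apply_eq] at hkey
  set S₁ := ((G.neighborFinset u).filter (fun z => z ∉ A)).erase v with hS₁
  set S₂ := (G.neighborFinset u).filter (fun z => z ∈ A.erase u) with hS₂
  have hsub : S₁ ∪ S₂ ⊆ (G.neighborFinset u).erase v := by
    intro z hz
    rcases Finset.mem_union.1 hz with h | h
    · exact Finset.mem_erase.2 ⟨(Finset.mem_erase.1 h).1,
        (Finset.mem_filter.1 (Finset.mem_erase.1 h).2).1⟩
    · refine Finset.mem_erase.2 ⟨?_, (Finset.mem_filter.1 h).1⟩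
      rintro rfl
      exact hv (Finset.mem_of_mem_erase (Finset.mem_filter.1 h).2)
  have hdisj : Disjoint S₁ S₂ := by
    rw [Finset.disjoint_left]
    intro z hz1 hz2
    exact (Finset.mem_filter.1 (Finset.mem_erase.1 hz1).2).2
      (Finset.mem_of_mem_erase (Finset.mem_filter.1 hz2).2)
  have habs : ∀ z ∈ S₁ ∪ S₂,
      |updateCoupling J u v y u z * spin (σ u) * spin (σ z)| = |J u z| := by
    intro z hz
    have hzv : z ≠ v := (Finset.mem_erase.1 (hsub hz)).1
    rw [updateCoupling_apply_ne]
    · rw [abs_mul, abs_mul, abs_spin, abs_spin, mul_one, mul_one]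
    · rintro (⟨-, h'⟩ | ⟨h', -⟩)
      · exact hzv h'
      · exact huv.ne h'
  have hB1 : -(∑ z ∈ S₁, |J u z|)
      ≤ ∑ z ∈ S₁, updateCoupling J u v y u z * spin (σ u) * spin (σ z) := by
    rw [← Finset.sum_neg_distrib]
    refine Finset.sum_le_sum fun z hz => ?_
    rw [← habs z (Finset.mem_union_left _ hz)]
    exact neg_abs_le _
  have hB2 : ∑ z ∈ S₂, updateCoupling J u v y u z * spin (σ u) * spin (σ z)
      ≤ ∑ z ∈ S₂, |J u z| := by
    refine Finset.sum_le_sum fun z hz => ?_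
    rw [← habs z (Finset.mem_union_right _ hz)]
    exact le_abs_self _
  have hU : ∑ z ∈ S₁, |J u z| + ∑ z ∈ S₂, |J u z|
      ≤ ∑ z ∈ (G.neighborFinset u).erase v, |J u z| := by
    rw [← Finset.sum_union hdisj]
    exact Finset.sum_le_sum_of_subset_of_nonneg hsub (fun z _ _ => abs_nonneg _)
  have hcomm : y * spin (σ u) * spin (σ v) = spin (σ u) * spin (σ v) * y := by ring
  linarith [hkey, h0, hB1, hB2, hU, hcomm]

lemma crossing_bound_right {u v : V} (huv : G.Adj u v) (J : V → V → ℝ)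
    (hJ : ∀ x z, J x z = J z x) (σ : V → Bool) (hσ : IsGroundState G J σ) (y : ℝ)
    (A : Finset V) (hu : u ∈ A) (hv : v ∉ A) :
    spin (σ u) * spin (σ v) * y - ∑ z ∈ (G.neighborFinset v).erase u, |J v z| ≤
      boundaryEnergy G (updateCoupling J u v y) σ A := by
  classical
  have hKsym := updateCoupling_symm J hJ u v y
  have hkey := boundaryEnergy_erase G (updateCoupling J u v y) hKsym σ (insert v A) v
    (Finset.mem_insert_self v A)
  rw [Finset.erase_insert hv] at hkey
  have hE : boundaryEnergy G (updateCoupling J u v y) σ (insert v A)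
      = boundaryEnergy G J σ (insert v A) :=
    boundaryEnergy_update_eq G J u v y σ _
      (iff_of_true (Finset.mem_insert_of_mem hu) (Finset.mem_insert_self v A))
  have h0 : 0 ≤ boundaryEnergy G J σ (insert v A) := hσ _
  rw [← hE] at h0
  have humem : u ∈ (G.neighborFinset v).filter (fun z => z ∈ A) :=
    Finset.mem_filter.2 ⟨(G.mem_neighborFinset v u).2 huv.symm, hu⟩
  rw [← Finset.add_sum_erase _ _ humem, updateCoupling_apply_eq'] at hkey
  set S₁ := (G.neighborFinset v).filter (fun z => z ∉ insert v A) with hS₁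
  set S₂ := ((G.neighborFinset v).filter (fun z => z ∈ A)).erase u with hS₂
  have hsub : S₁ ∪ S₂ ⊆ (G.neighborFinset v).erase u := by
    intro z hz
    rcases Finset.mem_union.1 hz with h | h
    · refine Finset.mem_erase.2 ⟨?_, (Finset.mem_filter.1 h).1⟩
      rintro rfl
      exact (Finset.mem_filter.1 h).2 (Finset.mem_insert_of_mem hu)
    · exact Finset.mem_erase.2 ⟨(Finset.mem_erase.1 h).1,
        (Finset.mem_filter.1 (Finset.mem_erase.1 h).2).1⟩
  have hdisj : Disjoint S₁ S₂ := by
    rw [Finset.disjoint_left]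
    intro z hz1 hz2
    exact (Finset.mem_filter.1 hz1).2
      (Finset.mem_insert_of_mem (Finset.mem_filter.1 (Finset.mem_erase.1 hz2).2).2)
  have habs : ∀ z ∈ S₁ ∪ S₂,
      |updateCoupling J u v y v z * spin (σ v) * spin (σ z)| = |J v z| := by
    intro z hz
    have hzu : z ≠ u := (Finset.mem_erase.1 (hsub hz)).1
    rw [updateCoupling_apply_ne]
    · rw [abs_mul, abs_mul, abs_spin, abs_spin, mul_one, mul_one]
    · rintro (⟨h', -⟩ | ⟨-, h'⟩)
      · exact huv.ne h'.symm
      · exact hzu h'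
  have hB1 : ∑ z ∈ S₁, updateCoupling J u v y v z * spin (σ v) * spin (σ z)
      ≤ ∑ z ∈ S₁, |J v z| := by
    refine Finset.sum_le_sum fun z hz => ?_
    rw [← habs z (Finset.mem_union_left _ hz)]
    exact le_abs_self _
  have hB2 : -(∑ z ∈ S₂, |J v z|)
      ≤ ∑ z ∈ S₂, updateCoupling J u v y v z * spin (σ v) * spin (σ z) := by
    rw [← Finset.sum_neg_distrib]
    refine Finset.sum_le_sum fun z hz => ?_
    rw [← habs z (Finset.mem_union_right _ hz)]
    exact neg_abs_le _
  have hU : ∑ z ∈ S₁, |J v z| + ∑ z ∈ S₂, |J v z|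
      ≤ ∑ z ∈ (G.neighborFinset v).erase u, |J v z| := by
    rw [← Finset.sum_union hdisj]
    exact Finset.sum_le_sum_of_subset_of_nonneg hsub (fun z _ _ => abs_nonneg _)
  have hcomm : y * spin (σ v) * spin (σ u) = spin (σ u) * spin (σ v) * y := by ring
  linarith [hkey, h0, hB1, hB2, hU, hcomm]

lemma isGroundState_update {u v : V} (huv : G.Adj u v) (J : V → V → ℝ)
    (hJ : ∀ x z, J x z = J z x) (σ : V → Bool) (hσ : IsGroundState G J σ) :
    IsGroundState G
      (updateCoupling J u v (spin (σ u) * spin (σ v) * superSatValue G J u v)) σ := by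
  classical
  intro A
  set y := spin (σ u) * spin (σ v) * superSatValue G J u v with hy
  have hss : spin (σ u) * spin (σ v) * y = superSatValue G J u v := by
    rw [hy]
    calc spin (σ u) * spin (σ v) * (spin (σ u) * spin (σ v) * superSatValue G J u v)
        = (spin (σ u) * spin (σ u)) * (spin (σ v) * spin (σ v))
            * superSatValue G J u v := by ring
      _ = superSatValue G J u v := by rw [spin_sq, spin_sq]; ring
  have hmin : superSatValue G J u v
      = min (∑ z ∈ (G.neighborFinset u).erase v, |J u z|)
            (∑ z ∈ (G.neighborFinset v).erase u, |J v z|) := rfl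
  by_cases hu : u ∈ A <;> by_cases hv : v ∈ A
  · rw [boundaryEnergy_update_eq G J u v y σ A (iff_of_true hu hv)]; exact hσ A
  · have h1 := crossing_bound_left G huv J hJ σ hσ y A hu hv
    have h2 := crossing_bound_right G huv J hJ σ hσ y A hu hv
    rw [hss] at h1 h2
    rcases min_cases (∑ z ∈ (G.neighborFinset u).erase v, |J u z|)
      (∑ z ∈ (G.neighborFinset v).erase u, |J v z|) with ⟨h, -⟩ | ⟨h, -⟩ <;> linarith
  · rw [updateCoupling_comm J u v y]
    have h1 := crossing_bound_left G huv.symm J hJ σ hσ y A hv hu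
    have h2 := crossing_bound_right G huv.symm J hJ σ hσ y A hv hu
    have hss' : spin (σ v) * spin (σ u) * y = superSatValue G J u v := by
      rw [← hss]; ring
    rw [hss'] at h1 h2
    rcases min_cases (∑ z ∈ (G.neighborFinset u).erase v, |J u z|)
      (∑ z ∈ (G.neighborFinset v).erase u, |J v z|) with ⟨h, -⟩ | ⟨h, -⟩ <;> linarith
  · rw [boundaryEnergy_update_eq G J u v y σ A (iff_of_false hu hv)]; exact hσ A

lemma groundState_singleton_bound {u v : V} (huv : G.Adj u v) (J : V → V → ℝ)
    (σ : V → Bool) (y : ℝ) (hy : IsGroundState G (updateCoupling J u v y) σ) :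
    -(∑ z ∈ (G.neighborFinset u).erase v, |J u z|) ≤ spin (σ u) * spin (σ v) * y := by
  classical
  have h := hy {u}
  unfold boundaryEnergy at h
  rw [Finset.sum_singleton] at h
  have hfil : (G.neighborFinset u).filter (fun z => z ∉ ({u} : Finset V))
      = G.neighborFinset u := by
    apply Finset.filter_true_of_mem
    intro z hz
    simp only [Finset.mem_singleton]
    intro hzu
    exact G.irrefl (hzu ▸ (G.mem_neighborFinset u z).1 hz)
  rw [hfil, ← Finset.add_sum_erase _ _ ((G.mem_neighborFinset u v).2 huv),
    updateCoupling_apply_eq] at h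
  have hB : ∑ z ∈ (G.neighborFinset u).erase v,
      updateCoupling J u v y u z * spin (σ u) * spin (σ z)
      ≤ ∑ z ∈ (G.neighborFinset u).erase v, |J u z| := by
    refine Finset.sum_le_sum fun z hz => ?_
    rw [updateCoupling_apply_ne]
    · calc J u z * spin (σ u) * spin (σ z)
          ≤ |J u z * spin (σ u) * spin (σ z)| := le_abs_self _
        _ = |J u z| := by rw [abs_mul, abs_mul, abs_spin, abs_spin, mul_one, mul_one]
    · rintro (⟨-, h'⟩ | ⟨h', -⟩)
      · exact (Finset.mem_erase.1 hz).1 h'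
      · exact huv.ne h'
  have hcomm : y * spin (σ u) * spin (σ v) = spin (σ u) * spin (σ v) * y := by ring
  linarith [h, hB, hcomm]

lemma groundState_min_bound {u v : V} (huv : G.Adj u v) (J : V → V → ℝ)
    (σ : V → Bool) (y : ℝ) (hy : IsGroundState G (updateCoupling J u v y) σ) :
    -superSatValue G J u v ≤ spin (σ u) * spin (σ v) * y := by
  have h1 := groundState_singleton_bound G huv J σ y hy
  have h2 := groundState_singleton_bound G huv.symm J σ y
    (by rw [← updateCoupling_comm]; exact hy)
  have hc : spin (σ v) * spin (σ u) * y = spin (σ u) * spin (σ v) * y := by ring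
  rw [hc] at h2
  have hmin : superSatValue G J u v
      = min (∑ z ∈ (G.neighborFinset u).erase v, |J u z|)
            (∑ z ∈ (G.neighborFinset v).erase u, |J v z|) := rfl
  rcases min_cases (∑ z ∈ (G.neighborFinset u).erase v, |J u z|)
    (∑ z ∈ (G.neighborFinset v).erase u, |J v z|) with ⟨h, -⟩ | ⟨h, -⟩
  · rw [hmin, h]; exact h1
  · rw [hmin, h]; exact h2

end Helpers

/-- Super-satisfied bound on critical values: for any edge `e = {u,v}` and any ground
state `σ`, `|C_e(J,σ)| ≤ 𝒮_e`. -/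
theorem abs_criticalValue_le_superSatValue {V : Type*} [DecidableEq V] (G : SimpleGraph V)
    [G.LocallyFinite] (u v : V) (huv : G.Adj u v) (J : V → V → ℝ)
    (hJsymm : ∀ x y, J x y = J y x) (σ : V → Bool) (hσ : IsGroundState G J σ) :
    |criticalValue G J σ u v| ≤ superSatValue G J u v := by
  classical
  have hmem := isGroundState_update G huv J hJsymm σ hσ
  have hsq : spin (σ u) * spin (σ v) = 1 ∨ spin (σ u) * spin (σ v) = -1 := by
    cases σ u <;> cases σ v <;> norm_num [spin]
  unfold criticalValue
  rcases hsq with h | h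
  · rw [if_pos h]
    rw [h, one_mul] at hmem
    have hlb : ∀ b ∈ {y : ℝ | IsGroundState G (updateCoupling J u v y) σ},
        -superSatValue G J u v ≤ b := by
      intro b hb
      have := groundState_min_bound G huv J σ b hb
      rwa [h, one_mul] at this
    rw [abs_le]
    refine ⟨le_csInf ⟨superSatValue G J u v, hmem⟩ hlb, csInf_le ⟨-superSatValue G J u v, hlb⟩ hmem⟩
  · rw [if_neg (by rw [h]; norm_num)]
    have hmem' : IsGroundState G (updateCoupling J u v (-superSatValue G J u v)) σ := by
      have he : spin (σ u) * spin (σ v) * superSatValue G J u v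
          = -superSatValue G J u v := by rw [h]; ring
      rwa [he] at hmem
    have hub : ∀ b ∈ {y : ℝ | IsGroundState G (updateCoupling J u v y) σ},
        b ≤ superSatValue G J u v := by
      intro b hb
      have := groundState_min_bound G huv J σ b hb
      rw [h] at this
      linarith
    rw [abs_le]
    refine ⟨le_csSup ⟨superSatValue G J u v, hub⟩ hmem',
      csSup_le ⟨-superSatValue G J u v, hmem'⟩ hub⟩
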